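/- Let B, W, C ∈ ℝ^{n×n} be symmetric positive definite matrices satisfying B ⪯ C⁻¹ ⪯ B + W. Then 0 ⪯ I − B^{1/2} C B^{1/2} ⪯ I − B^{1/2}(B + W)⁻¹B^{1/2}, and consequently every eigenvalue λ of the (generally nonsymmetric) matrix I − CB is real and satisfies 0 ≤ λ ≤ 1 − μ, where μ > 0 is the smallest eigenvalue of B^{1/2}(B + W)⁻¹B^{1/2}; in particular the spectral radius of I − CB is strictly less than 1. -/

import Mathlib

open Matrix

namespace Matrix.PosSemidef

open scoped ComplexOrder

/-- The positive semidefinite square root of a positive semidefinite matrix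
(the definition removed from Mathlib, restored with its old meaning). -/
noncomputable def sqrt {n : Type*} [Fintype n] [DecidableEq n] {𝕜 : Type*} [RCLike 𝕜]
    {A : Matrix n n 𝕜} (hA : PosSemidef A) : Matrix n n 𝕜 :=
  hA.1.eigenvectorUnitary.1 * diagonal ((↑) ∘ (√·) ∘ hA.1.eigenvalues) *
    (star hA.1.eigenvectorUnitary : Matrix n n 𝕜)

end Matrix.PosSemidef

/-!
Conjugation by `s = B^{1/2}` and the order-reversing property of inversion on positive
definite matrices turn `B ≤ C⁻¹ ≤ B + W` into `s (B + W)⁻¹ s ≤ s C s ≤ s B⁻¹ s = 1`.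
Since `1 - C B = s⁻¹ (1 - s C s) s`, the complex spectrum of `1 - C B` is that of the
symmetric matrix `T = 1 - s C s`, hence real, and `0 ≤ T ≤ 1 - s (B + W)⁻¹ s ≤ (1 - μ) • 1`
confines it to `[0, 1 - μ]`.
-/

open scoped ComplexOrder MatrixOrder

namespace Matrix

variable {n 𝕜 : Type*} [Fintype n] [DecidableEq n] [RCLike 𝕜]

theorem PosSemidef.sqrt_eq_cfcSqrt {A : Matrix n n 𝕜} (hA : A.PosSemidef) :
    hA.sqrt = CFC.sqrt A := by
  rw [CFC.sqrt_eq_real_sqrt A hA.nonneg, cfcₙ_eq_cfc, hA.1.cfc_eq, IsHermitian.cfc,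
    Unitary.conjStarAlgAut_apply]
  rfl

theorem PosDef.isUnit_cfcSqrt {A : Matrix n n 𝕜} (hA : A.PosDef) : IsUnit (CFC.sqrt A) :=
  (CFC.isUnit_sqrt_iff A hA.posSemidef.nonneg).mpr hA.isUnit

theorem PosDef.cfcSqrt_mul_inv_mul_cfcSqrt {A : Matrix n n 𝕜} (hA : A.PosDef) :
    CFC.sqrt A * A⁻¹ * CFC.sqrt A = 1 := by
  obtain ⟨u, hu⟩ := hA.isUnit_cfcSqrt
  nth_rw 2 [← CFC.sqrt_mul_sqrt_self A hA.posSemidef.nonneg]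
  rw [← hu, mul_inv_rev, ← coe_units_inv]
  simp

theorem inv_le_one_of_one_le {X : Matrix n n 𝕜} (h : 1 ≤ X) : X⁻¹ ≤ 1 := by
  have hX : X.PosDef := by simpa using PosDef.one.add_posSemidef (le_iff.mp h)
  obtain ⟨u, rfl⟩ := hX.isUnit
  have hu_inv : IsSelfAdjoint u⁻¹.val := by
    rw [coe_units_inv]
    exact hX.1.inv
  rw [← map_one (algebraMap ℝ (Matrix n n 𝕜))] at h ⊢
  rw [algebraMap_le_iff_le_spectrum hX.1] at h
  rw [← coe_units_inv, le_algebraMap_iff_spectrum_le hu_inv, ← spectrum.map_inv]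
  intro x hx
  simpa using inv_le_one_of_one_le₀ (h _ hx)

theorem PosDef.inv_le_inv {A D : Matrix n n 𝕜} (hA : A.PosDef) (h : A ≤ D) :
    D⁻¹ ≤ A⁻¹ := by
  -- with `u = A^{1/2}`, conjugation by `u⁻¹` reduces to the case `A = 1`
  obtain ⟨u, hu⟩ := hA.isUnit_cfcSqrt
  have hu_inv : IsSelfAdjoint u⁻¹.val := by
    rw [coe_units_inv, hu]
    exact IsHermitian.inv (IsSelfAdjoint.of_nonneg (CFC.sqrt_nonneg A))
  have hone_le : 1 ≤ u⁻¹.val * D * u⁻¹.val :=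
    calc 1 = u⁻¹.val * A * u⁻¹.val := by
          rw [← CFC.sqrt_mul_sqrt_self A hA.posSemidef.nonneg, ← hu]
          simp
      _ ≤ u⁻¹.val * D * u⁻¹.val := hu_inv.conjugate_le_conjugate h
  have hconj : u.val * D⁻¹ * u.val ≤ u.val * A⁻¹ * u.val := by
    rw [hu, hA.cfcSqrt_mul_inv_mul_cfcSqrt, ← hu]
    simpa [mul_inv_rev, coe_units_inv, mul_assoc] using inv_le_one_of_one_le hone_le
  simpa [mul_assoc] using hu_inv.conjugate_le_conjugate hconj

theorem IsHermitian.spectrum_map_ofReal_subset {A : Matrix n n ℝ} (hA : A.IsHermitian) :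
    spectrum ℂ (A.map Complex.ofReal) ⊆ Complex.ofReal '' spectrum ℝ A := by
  have hA' : (A.map Complex.ofReal).IsHermitian :=
    hA.map _ fun _ => (Complex.conj_ofReal _).symm
  rw [hA'.spectrum_eq_image_range, ← hA'.spectrum_real_eq_range_eigenvalues]
  exact Set.image_mono (AlgHom.spectrum_apply_subset (Algebra.ofId ℝ ℂ).mapMatrix A)

end Matrix

theorem spectrum_map_units_conjugate {R A B : Type*} [CommSemiring R] [Ring A] [Ring B]
    [Algebra R B] (φ : A →+* B) (u : Aˣ) (a : A) :
    spectrum R (φ (↑u⁻¹ * a * ↑u)) = spectrum R (φ a) := by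
  simpa using spectrum.units_conjugate' (R := R) (a := φ a) (u := Units.map φ u)

theorem Matrix.spectrum_map_ofReal_subset_Icc_of_conj {n : Type*} [Fintype n] [DecidableEq n]
    {A T : Matrix n n ℝ} {r : ℝ} (u : (Matrix n n ℝ)ˣ) (hA : A = u⁻¹.val * T * u.val)
    (hT : 0 ≤ T) (hTr : T ≤ algebraMap ℝ _ r) :
    spectrum ℂ (A.map Complex.ofReal) ⊆ Complex.ofReal '' Set.Icc 0 r := by
  rw [hA]
  intro z hz
  obtain ⟨x, hx, rfl⟩ := (nonneg_iff_posSemidef.mp hT).1.spectrum_map_ofReal_subset <|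
    (spectrum_map_units_conjugate Complex.ofRealHom.mapMatrix u T).subset hz
  exact ⟨x, ⟨spectrum_nonneg_of_nonneg hT hx,
    (le_algebraMap_iff_spectrum_le hT.isSelfAdjoint).mp hTr x hx⟩, rfl⟩

theorem kalman_mean_iteration_spectral_bound_general
    {n : ℕ}
    (B W C : Matrix (Fin n) (Fin n) ℝ)
    (hB : B.PosDef) (hW : W.PosDef) (hC : C.PosDef)
    (hlow : (C⁻¹ - B).PosSemidef) (hup : (B + W - C⁻¹).PosSemidef)
    (μ : ℝ)
    (hμ : IsLeast (spectrum ℝ (hB.posSemidef.sqrt * (B + W)⁻¹ * hB.posSemidef.sqrt)) μ) :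
    0 < μ ∧
    ((1 : Matrix (Fin n) (Fin n) ℝ) - hB.posSemidef.sqrt * C * hB.posSemidef.sqrt).PosSemidef ∧
    (((1 : Matrix (Fin n) (Fin n) ℝ) - hB.posSemidef.sqrt * (B + W)⁻¹ * hB.posSemidef.sqrt) -
      ((1 : Matrix (Fin n) (Fin n) ℝ) - hB.posSemidef.sqrt * C * hB.posSemidef.sqrt)).PosSemidef ∧
    ∀ z ∈ spectrum ℂ (((1 : Matrix (Fin n) (Fin n) ℝ) - C * B).map (Complex.ofReal)),
      ∃ lam : ℝ, z = (lam : ℂ) ∧ 0 ≤ lam ∧ lam ≤ 1 - μ ∧ ‖z‖ < 1 := by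
  obtain ⟨s, hs_eq⟩ := hB.isUnit_cfcSqrt
  rw [hB.posSemidef.sqrt_eq_cfcSqrt, ← hs_eq] at hμ ⊢
  have hs : IsSelfAdjoint s.val := hs_eq ▸ .of_nonneg (CFC.sqrt_nonneg B)
  have hC_inv_inv : C⁻¹⁻¹ = C :=
    nonsing_inv_nonsing_inv C ((isUnit_iff_isUnit_det C).mp hC.isUnit)
  have hCB : C ≤ B⁻¹ := hC_inv_inv ▸ hB.inv_le_inv hlow
  have hBWC : (B + W)⁻¹ ≤ C := hC_inv_inv ▸ hC.inv.inv_le_inv hup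
  have hT : 0 ≤ 1 - s.val * C * s.val := by
    rw [sub_nonneg, ← hB.cfcSqrt_mul_inv_mul_cfcSqrt, ← hs_eq]
    exact hs.conjugate_le_conjugate hCB
  have hTM : 1 - s.val * C * s.val ≤ 1 - s.val * (B + W)⁻¹ * s.val :=
    sub_le_sub_left (hs.conjugate_le_conjugate hBWC) 1
  have hM : (s.val * (B + W)⁻¹ * s.val).PosDef := by
    nth_rw 2 [← hs.star_eq]
    exact s.isUnit.posDef_star_right_conjugate_iff.mpr (hB.add_posSemidef hW.posSemidef).inv
  have hμM : algebraMap ℝ _ μ ≤ s.val * (B + W)⁻¹ * s.val :=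
    (algebraMap_le_iff_le_spectrum hM.1).mpr hμ.2
  have hTμ : 1 - s.val * C * s.val ≤ algebraMap ℝ _ (1 - μ) := by
    rw [map_sub, map_one]
    exact hTM.trans (sub_le_sub_left hμM 1)
  have hμ_pos : 0 < μ := (isStrictlyPositive_iff_posDef.mpr hM).spectrum_pos hμ.1
  refine ⟨hμ_pos, nonneg_iff_posSemidef.mp hT, le_iff.mp hTM, fun z hz => ?_⟩
  have hsim : 1 - C * B = s⁻¹.val * (1 - s.val * C * s.val) * s.val := by
    nth_rw 1 [← CFC.sqrt_mul_sqrt_self B hB.posSemidef.nonneg]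
    rw [← hs_eq]
    simp [mul_sub, sub_mul, mul_assoc]
  obtain ⟨lam, ⟨h0, h1⟩, rfl⟩ := spectrum_map_ofReal_subset_Icc_of_conj s hsim hT hTμ hz
  exact ⟨lam, rfl, h0, h1, by rw [Complex.norm_real, Real.norm_of_nonneg h0]; linarith⟩

/-- Let `B, W, C` be symmetric positive definite with
`B ⪯ C⁻¹ ⪯ B + W`. Then `0 ⪯ I − B^{1/2} C B^{1/2} ⪯ I − B^{1/2}(B+W)⁻¹B^{1/2}`, and
every eigenvalue `λ` of the (generally nonsymmetric) matrix `I − C B` is real with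
`0 ≤ λ ≤ 1 − μ`, where `μ > 0` is the smallest eigenvalue of
`B^{1/2}(B+W)⁻¹B^{1/2}`; in particular the spectral radius of `I − C B` is strictly
less than `1`. -/
theorem kalman_mean_iteration_spectral_bound
    {n : ℕ} (hn : 0 < n)
    (B W C : Matrix (Fin n) (Fin n) ℝ)
    (hB : B.PosDef) (hW : W.PosDef) (hC : C.PosDef)
    (hlow : (C⁻¹ - B).PosSemidef) (hup : (B + W - C⁻¹).PosSemidef)
    (μ : ℝ)
    (hμ : IsLeast (spectrum ℝ (hB.posSemidef.sqrt * (B + W)⁻¹ * hB.posSemidef.sqrt)) μ) :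
    0 < μ ∧
    ((1 : Matrix (Fin n) (Fin n) ℝ) - hB.posSemidef.sqrt * C * hB.posSemidef.sqrt).PosSemidef ∧
    (((1 : Matrix (Fin n) (Fin n) ℝ) - hB.posSemidef.sqrt * (B + W)⁻¹ * hB.posSemidef.sqrt) -
      ((1 : Matrix (Fin n) (Fin n) ℝ) - hB.posSemidef.sqrt * C * hB.posSemidef.sqrt)).PosSemidef ∧
    ∀ z ∈ spectrum ℂ (((1 : Matrix (Fin n) (Fin n) ℝ) - C * B).map (Complex.ofReal)),
      ∃ lam : ℝ, z = (lam : ℂ) ∧ 0 ≤ lam ∧ lam ≤ 1 - μ ∧ ‖z‖ < 1 :=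
  kalman_mean_iteration_spectral_bound_general B W C hB hW hC hlow hup μ hμ
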